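/- A two-dimensional domino-complete substitution σ is consistent if and only if it is consistent on every 2×2 pattern, i.e., on every pattern whose support is a translate of {0,1}×{0,1}. -/

import Mathlib

/-!
A consistent substitution is in particular consistent on the `2 × 2` patterns, which are
`C_σ`-covered because σ is domino-complete. Conversely, extend the types of a pattern to a type
field `τ : ℤ² → A` and give each unit edge `v → v'` of the grid the weight
`σ_rule((v, τ v), (v', τ v'))`. Consistency on the `2 × 2` patterns of `τ` makes these weights
antisymmetric with zero sum around every unit square, so they are the increments of a potential
`Φ : ℤ² → ℤ²`, and the image vector of every path telescopes to `Φ(end) - Φ(start)`.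
-/

open scoped Classical

/-- A combinatorial substitution on alphabet `A` with vectors in `V`:
a base rule sending each letter to a pattern, together with a deterministic
finite set of concatenation rules.  `rule t t' u = some v` encodes the
concatenation rule `(t, t', u) ↦ v`. -/
structure Subst (A : Type*) (V : Type*) [AddCommGroup V] where
  /-- the base rule -/
  base : A → Finset (V × A)
  /-- the image of a letter is a pattern: its cells have distinct vectors -/
  basePat : ∀ t : A, ∀ c ∈ base t, ∀ c' ∈ base t, c.1 = c'.1 → c = c'
  /-- the concatenation rules, as a partial function -/
  rule : A → A → V → Option V
  /-- there are finitely many concatenation rules -/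
  finiteRules : {u : V | ∃ t t', rule t t' u ≠ none}.Finite
  /-- determinism: no two rules with left-hand sides `(t,t',u)` and `(t,t',-u)` -/
  det : ∀ t t' u, (rule t t' u).isSome → (rule t t' (-u)).isSome → u = -u

/-- A pattern is a finite set of cells with pairwise distinct vectors. -/
def IsPattern {V A : Type*} (P : Finset (V × A)) : Prop :=
  ∀ c ∈ P, ∀ c' ∈ P, c.1 = c'.1 → c = c'

namespace Subst

variable {A V : Type*} [AddCommGroup V]

/-- `σ_rule(c, c')`: the relative position of the images of the two cells
`c`, `c'`, when some concatenation rule applies to them. -/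
def ruleVec (σ : Subst A V) (c c' : V × A) : Option V :=
  match σ.rule c.2 c'.2 (c'.1 - c.1) with
  | some v => some v
  | none => (σ.rule c'.2 c.2 (c.1 - c'.1)).map (fun v => -v)

/-- The image vector `ω_σ(γ)` of a path `γ`. -/
def omega (σ : Subst A V) (γ : List (V × A)) : V :=
  ((γ.zip γ.tail).map (fun p => (σ.ruleVec p.1 p.2).getD 0)).sum

/-- A `C_σ`-path: a nonempty sequence of cells in which any two consecutive
cells form a translated copy of a starting pattern of `σ`, and any two cells
with the same vector are equal. -/
def IsPath (σ : Subst A V) (γ : List (V × A)) : Prop :=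
  γ ≠ [] ∧ γ.Chain' (fun c c' => (σ.ruleVec c c').isSome) ∧
    ∀ c ∈ γ, ∀ c' ∈ γ, c.1 = c'.1 → c = c'

/-- A `C_σ`-path of the pattern `P`. -/
def IsPathOf (σ : Subst A V) (P : Finset (V × A)) (γ : List (V × A)) : Prop :=
  σ.IsPath γ ∧ ∀ c ∈ γ, c ∈ P

/-- A `C_σ`-loop of the pattern `P`. -/
def IsLoopOf (σ : Subst A V) (P : Finset (V × A)) (γ : List (V × A)) : Prop :=
  σ.IsPathOf P γ ∧ γ.head? = γ.getLast?

/-- `P` is `C_σ`-covered: any two of its cells are joined by a `C_σ`-path of `P`. -/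
def Covered (σ : Subst A V) (P : Finset (V × A)) : Prop :=
  ∀ c ∈ P, ∀ c' ∈ P,
    ∃ γ, σ.IsPathOf P γ ∧ γ.head? = some c ∧ γ.getLast? = some c'

/-- `σ` is consistent on `P`: any two `C_σ`-paths of `P` with the same first
and last cells have the same image vector. -/
def ConsistentOn (σ : Subst A V) (P : Finset (V × A)) : Prop :=
  ∀ γ γ' : List (V × A), σ.IsPathOf P γ → σ.IsPathOf P γ' →
    γ.head? = γ'.head? → γ.getLast? = γ'.getLast? → σ.omega γ = σ.omega γ'

/-- `σ` is consistent: it is consistent on every `C_σ`-covered pattern. -/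
def Consistent (σ : Subst A V) : Prop :=
  ∀ P : Finset (V × A), IsPattern P → σ.Covered P → σ.ConsistentOn P

/-- The support of the image of a letter. -/
noncomputable def supp (σ : Subst A V) (t : A) : Finset V :=
  (σ.base t).image Prod.fst

/-- `σ` is non-overlapping on `P`: the images of two distinct cells of `P`
joined by a `C_σ`-path of `P` have disjoint supports. -/
def NonOverlappingOn (σ : Subst A V) (P : Finset (V × A)) : Prop :=
  ∀ c ∈ P, ∀ c' ∈ P, c ≠ c' → ∀ γ, σ.IsPathOf P γ →
    γ.head? = some c → γ.getLast? = some c' →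
    ∀ b ∈ σ.supp c'.2, σ.omega γ + b ∉ σ.supp c.2

/-- `σ` is non-overlapping: it is non-overlapping on every `C_σ`-covered pattern. -/
def NonOverlapping (σ : Subst A V) : Prop :=
  ∀ P : Finset (V × A), IsPattern P → σ.Covered P → σ.NonOverlappingOn P

end Subst

/-- A domino: a two-cell two-dimensional pattern whose vectors differ by
`(1,0)`, `(-1,0)`, `(0,1)` or `(0,-1)`. -/
def IsDomino {A : Type*} (P : Finset ((ℤ × ℤ) × A)) : Prop :=
  ∃ (v u : ℤ × ℤ) (t t' : A), (u = (1, 0) ∨ u = (0, 1)) ∧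
    P = {(v, t), (v + u, t')}

/-- A `2 × 2` pattern: a pattern whose support is a translate of
`{0,1} × {0,1}`. -/
def IsTwoByTwo {A : Type*} (P : Finset ((ℤ × ℤ) × A)) : Prop :=
  IsPattern P ∧ ∃ w : ℤ × ℤ,
    P.image Prod.fst = ({w, w + (1, 0), w + (0, 1), w + (1, 1)} : Finset (ℤ × ℤ))

/-- A two-dimensional substitution is domino-complete when its starting
patterns are exactly all the dominoes. -/
def Subst.DominoComplete {A : Type*} (σ : Subst A (ℤ × ℤ)) : Prop :=
  (∀ (t t' : A) (u : ℤ × ℤ), σ.rule t t' u ≠ none →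
      u = (1, 0) ∨ u = (-1, 0) ∨ u = (0, 1) ∨ u = (0, -1)) ∧
  ∀ t t' : A,
    (σ.ruleVec ((0, 0), t) ((1, 0), t')).isSome ∧
    (σ.ruleVec ((0, 0), t) ((0, 1), t')).isSome

theorem Int.exists_primitive {M : Type*} [AddCommGroup M] (f : ℤ → M) :
    ∃ F : ℤ → M, F 0 = 0 ∧ ∀ n, F (n + 1) = F n + f n := by
  refine ⟨fun n => ∑ i ∈ Finset.Ico 0 n, f i - ∑ i ∈ Finset.Ico n 0, f i, by simp, fun n => ?_⟩
  rcases le_or_gt 0 n with hn | hn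
  · simp only [Finset.Ico_eq_empty_of_le hn, Finset.Ico_eq_empty_of_le (by omega : 0 ≤ n + 1),
      ← Finset.sum_Ico_add_eq_sum_Ico_add_one hn]
    abel
  · simp only [Finset.Ico_eq_empty_of_le hn.le, Finset.Ico_eq_empty_of_le (by omega : n + 1 ≤ 0),
      ← Finset.insert_Ico_add_one_left_eq_Ico hn,
      Finset.sum_insert (by simp : n ∉ Finset.Ico (n + 1) 0)]
    abel

theorem exists_potential_of_curl_eq_zero {M : Type*} [AddCommGroup M] (g₁ g₂ : ℤ × ℤ → M)
    (hcurl : ∀ v, g₁ v + g₂ (v + (1, 0)) = g₂ v + g₁ (v + (0, 1))) :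
    ∃ Φ : ℤ × ℤ → M, ∀ v, Φ (v + (1, 0)) = Φ v + g₁ v ∧ Φ (v + (0, 1)) = Φ v + g₂ v := by
  obtain ⟨R, -, hR⟩ := Int.exists_primitive fun x => g₁ (x, 0)
  choose C hC₀ hC using fun x => Int.exists_primitive fun y => g₂ (x, y)
  have hcol : ∀ x y, C (x + 1) y = C x y + g₁ (x, y) - g₁ (x, 0) := by
    intro x y
    have hcurl' : ∀ y, g₁ (x, y) + g₂ (x + 1, y) = g₂ (x, y) + g₁ (x, y + 1) := fun y => by
      simpa using hcurl (x, y)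
    induction y using Int.induction_on with
    | zero => simp [hC₀]
    | succ k ih =>
      rw [hC, hC, ih]
      linear_combination (norm := module) hcurl' k
    | pred k ih =>
      have h₁ := hC (x + 1) (-k - 1)
      have h₂ := hC x (-k - 1)
      have hc := hcurl' (-k - 1)
      rw [sub_add_cancel] at h₁ h₂ hc
      linear_combination (norm := module) ih - h₁ + h₂ - hc
  refine ⟨fun v => R v.1 + C v.1 v.2, fun ⟨x, y⟩ => ⟨?_, ?_⟩⟩
  · simp only [Prod.mk_add_mk, add_zero, hR, hcol]
    abel
  · simp only [Prod.mk_add_mk, add_zero, hC]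
    abel

noncomputable def graphOn {V A : Type*} (τ : V → A) (S : Finset V) : Finset (V × A) :=
  S.image fun v => (v, τ v)

section graphOn

variable {V A : Type*}

theorem mem_graphOn {τ : V → A} {S : Finset V} {c : V × A} :
    c ∈ graphOn τ S ↔ c.1 ∈ S ∧ τ c.1 = c.2 := by
  obtain ⟨v, t⟩ := c
  simp [graphOn, eq_comm]

theorem mk_mem_graphOn {τ : V → A} {S : Finset V} {v : V} (hv : v ∈ S) :
    (v, τ v) ∈ graphOn τ S :=
  mem_graphOn.2 ⟨hv, rfl⟩

theorem forall_mem_graphOn {τ : V → A} {S : Finset V} {p : V × A → Prop} :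
    (∀ c ∈ graphOn τ S, p c) ↔ ∀ v ∈ S, p (v, τ v) :=
  Finset.forall_mem_image

theorem isPattern_graphOn (τ : V → A) (S : Finset V) : IsPattern (graphOn τ S) := by
  intro c hc c' hc' h
  rw [mem_graphOn] at hc hc'
  exact Prod.ext h (by rw [← hc.2, ← hc'.2, h])

theorem image_fst_graphOn [DecidableEq V] (τ : V → A) (S : Finset V) :
    (graphOn τ S).image Prod.fst = S := by
  simp [graphOn, Finset.image_image, Function.comp_def]

theorem IsPattern.exists_eq_graphOn [DecidableEq V] [Nonempty A] {P : Finset (V × A)}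
    (hP : IsPattern P) : ∃ τ : V → A, P = graphOn τ (P.image Prod.fst) := by
  refine ⟨fun v => if h : ∃ c ∈ P, c.1 = v then h.choose.2 else Classical.arbitrary A, ?_⟩
  ext c
  rw [mem_graphOn, Finset.mem_image]
  constructor
  · intro hc
    have h : ∃ c' ∈ P, c'.1 = c.1 := ⟨c, hc, rfl⟩
    refine ⟨⟨c, hc, rfl⟩, ?_⟩
    simp only [dif_pos h]
    rw [hP _ h.choose_spec.1 c hc h.choose_spec.2]
  · rintro ⟨h, hτ⟩
    simp only [dif_pos h] at hτ
    exact Prod.ext h.choose_spec.2 hτ ▸ h.choose_spec.1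

end graphOn

namespace Subst

variable {A V : Type*} [AddCommGroup V] (σ : Subst A V)

theorem isSome_ruleVec_iff {c c' : V × A} : (σ.ruleVec c c').isSome ↔
    (σ.rule c.2 c'.2 (c'.1 - c.1)).isSome ∨ (σ.rule c'.2 c.2 (c.1 - c'.1)).isSome := by
  unfold ruleVec
  cases σ.rule c.2 c'.2 (c'.1 - c.1) <;> simp

theorem isSome_ruleVec_comm {c c' : V × A} :
    (σ.ruleVec c' c).isSome ↔ (σ.ruleVec c c').isSome := by
  rw [isSome_ruleVec_iff, isSome_ruleVec_iff, or_comm]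

theorem ruleVec_add_right (v v' w : V) (t t' : A) :
    σ.ruleVec (v + w, t) (v' + w, t') = σ.ruleVec (v, t) (v', t') := by
  simp only [ruleVec, add_sub_add_right_eq_sub]

theorem isPathOf_iff {P : Finset (V × A)} (hP : IsPattern P) {γ : List (V × A)} :
    σ.IsPathOf P γ ↔
      γ ≠ [] ∧ γ.IsChain (fun c c' => (σ.ruleVec c c').isSome) ∧ ∀ c ∈ γ, c ∈ P :=
  ⟨fun ⟨⟨hne, hchain, _⟩, hmem⟩ => ⟨hne, hchain, hmem⟩, fun ⟨hne, hchain, hmem⟩ =>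
    ⟨⟨hne, hchain, fun c hc c' hc' => hP c (hmem c hc) c' (hmem c' hc')⟩, hmem⟩⟩

def Joined (P : Finset (V × A)) (c c' : V × A) : Prop :=
  ∃ γ, σ.IsPathOf P γ ∧ γ.head? = some c ∧ γ.getLast? = some c'

variable {σ} {P : Finset (V × A)} {c c' c'' : V × A}

theorem joined_refl (hc : c ∈ P) : σ.Joined P c c :=
  ⟨[c], ⟨⟨by simp, List.isChain_singleton c, by simp_all⟩, by simpa⟩, rfl, rfl⟩

theorem joined_of_isSome (hP : IsPattern P) (hc : c ∈ P) (hc' : c' ∈ P)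
    (h : (σ.ruleVec c c').isSome) : σ.Joined P c c' :=
  ⟨[c, c'], (isPathOf_iff σ hP).2 ⟨by simp, List.isChain_pair.2 h, by simp [hc, hc']⟩, rfl, rfl⟩

theorem Joined.symm (h : σ.Joined P c c') : σ.Joined P c' c := by
  obtain ⟨γ, ⟨⟨hne, hchain, hinj⟩, hmem⟩, hhead, hlast⟩ := h
  refine ⟨γ.reverse, ⟨⟨by simpa using hne, ?_, by simpa using hinj⟩, by simpa using hmem⟩,
    by rwa [List.head?_reverse], by rwa [List.getLast?_reverse]⟩
  exact List.isChain_reverse.2 (hchain.imp fun _ _ => (σ.isSome_ruleVec_comm).2)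

theorem Joined.trans (hP : IsPattern P) (h : σ.Joined P c c') (h' : σ.Joined P c' c'') :
    σ.Joined P c c'' := by
  obtain ⟨γ, hγ, hhead, hlast⟩ := h
  obtain ⟨δ, hδ, hhead', hlast'⟩ := h'
  obtain ⟨hne, hchain, hmem⟩ := (isPathOf_iff σ hP).1 hγ
  obtain ⟨-, hchain', hmem'⟩ := (isPathOf_iff σ hP).1 hδ
  obtain ⟨δ, rfl⟩ : ∃ δ', δ = c' :: δ' := by
    cases δ <;> simp_all
  refine ⟨γ ++ δ, (isPathOf_iff σ hP).2 ⟨by simp [hne], ?_, ?_⟩, ?_, ?_⟩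
  · refine hchain.append hchain'.tail fun x hx y hy => ?_
    rw [hlast, Option.mem_some_iff] at hx
    subst hx
    cases δ with
    | nil => simp at hy
    | cons d δ => simp_all
  · intro x hx
    rcases List.mem_append.1 hx with hx | hx
    exacts [hmem x hx, hmem' x (List.mem_cons_of_mem c' hx)]
  · simp [List.head?_append, hhead]
  · cases h : δ.getLast? <;> simp_all [List.getLast?_append, List.getLast?_cons]

@[simp]
theorem omega_singleton (c : V × A) : σ.omega [c] = 0 := by
  simp [omega]

theorem omega_cons_cons (c c' : V × A) (γ : List (V × A)) :
    σ.omega (c :: c' :: γ) = (σ.ruleVec c c').getD 0 + σ.omega (c' :: γ) := by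
  simp [omega]

theorem ConsistentOn.ruleVec_swap (hcons : σ.ConsistentOn P) (hP : IsPattern P)
    {a b : V × A} (ha : a ∈ P) (hb : b ∈ P) (hab : (σ.ruleVec a b).isSome) :
    (σ.ruleVec b a).getD 0 = -(σ.ruleVec a b).getD 0 := by
  have hba : (σ.ruleVec b a).isSome := σ.isSome_ruleVec_comm.2 hab
  have h := hcons [a, b, a] [a]
    ((σ.isPathOf_iff hP).2 ⟨by simp, by simp [hab, hba], by simp [ha, hb]⟩)
    ((σ.isPathOf_iff hP).2 ⟨by simp, by simp, by simp [ha]⟩) rfl rfl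
  simp only [omega_cons_cons, omega_singleton, add_zero] at h
  exact eq_neg_of_add_eq_zero_right h

theorem ConsistentOn.ruleVec_add_ruleVec (hcons : σ.ConsistentOn P) (hP : IsPattern P)
    {a b d e : V × A} (ha : a ∈ P) (hb : b ∈ P) (hd : d ∈ P) (he : e ∈ P)
    (hab : (σ.ruleVec a b).isSome) (hbe : (σ.ruleVec b e).isSome)
    (had : (σ.ruleVec a d).isSome) (hde : (σ.ruleVec d e).isSome) :
    (σ.ruleVec a b).getD 0 + (σ.ruleVec b e).getD 0 =
      (σ.ruleVec a d).getD 0 + (σ.ruleVec d e).getD 0 := by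
  have h := hcons [a, b, e] [a, d, e]
    ((σ.isPathOf_iff hP).2 ⟨by simp, by simp [hab, hbe], by simp [ha, hb, he]⟩)
    ((σ.isPathOf_iff hP).2 ⟨by simp, by simp [had, hde], by simp [ha, hd, he]⟩) rfl rfl
  simpa only [omega_cons_cons, omega_singleton, add_zero] using h

theorem omega_eq_sub_of_isChain (Φ : V × A → V) {γ : List (V × A)}
    (hγ : γ.IsChain fun c c' => (σ.ruleVec c c').getD 0 = Φ c' - Φ c) {c c' : V × A}
    (hhead : γ.head? = some c) (hlast : γ.getLast? = some c') :
    σ.omega γ = Φ c' - Φ c := by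
  induction γ generalizing c with
  | nil => simp at hhead
  | cons a γ ih =>
    obtain rfl : a = c := by simpa using hhead
    cases γ with
    | nil => simp_all
    | cons b γ =>
      rw [List.isChain_cons_cons] at hγ
      rw [omega_cons_cons, hγ.1, ih hγ.2 rfl (by simpa using hlast)]
      abel

theorem consistentOn_of_potential (Φ : V × A → V)
    (hΦ : ∀ c ∈ P, ∀ c' ∈ P, (σ.ruleVec c c').isSome → (σ.ruleVec c c').getD 0 = Φ c' - Φ c) :
    σ.ConsistentOn P := by
  have hpath : ∀ γ, σ.IsPathOf P γ → ∀ c c', γ.head? = some c → γ.getLast? = some c' →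
      σ.omega γ = Φ c' - Φ c := fun γ ⟨⟨_, hchain, _⟩, hmem⟩ _ _ =>
    omega_eq_sub_of_isChain Φ
      (hchain.imp_of_mem_imp fun c c' hc hc' => hΦ c (hmem c hc) c' (hmem c' hc'))
  intro γ γ' hγ hγ' hhead hlast
  obtain ⟨c, hc⟩ := Option.isSome_iff_exists.1 (List.isSome_head?.2 hγ.1.1)
  obtain ⟨c', hc'⟩ := Option.isSome_iff_exists.1 (List.getLast?_isSome.2 hγ.1.1)
  rw [hpath γ hγ c c' hc hc', hpath γ' hγ' c c' (hhead ▸ hc) (hlast ▸ hc')]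

def edgeVec (σ : Subst A V) (τ : V → A) (v v' : V) : V :=
  (σ.ruleVec (v, τ v) (v', τ v')).getD 0

end Subst

def square (w : ℤ × ℤ) : Finset (ℤ × ℤ) :=
  {w, w + (1, 0), w + (0, 1), w + (1, 1)}

theorem add_one_zero_add_zero_one (w : ℤ × ℤ) : w + (1, 0) + (0, 1) = w + (1, 1) := by
  rw [add_assoc]; rfl

theorem add_zero_one_add_one_zero (w : ℤ × ℤ) : w + (0, 1) + (1, 0) = w + (1, 1) := by
  rw [add_assoc]; rfl

section TwoByTwo

variable {A : Type*}

theorem isTwoByTwo_graphOn_square (τ : ℤ × ℤ → A) (w : ℤ × ℤ) :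
    IsTwoByTwo (graphOn τ (square w)) :=
  ⟨isPattern_graphOn τ _, w, image_fst_graphOn τ _⟩

theorem IsTwoByTwo.exists_eq_graphOn_square {P : Finset ((ℤ × ℤ) × A)} (hP : IsTwoByTwo P) :
    ∃ τ w, P = graphOn τ (square w) := by
  obtain ⟨hpat, w, hw⟩ := hP
  obtain ⟨c, -, -⟩ := Finset.mem_image.1 (hw ▸ Finset.mem_insert_self w _)
  have : Nonempty A := ⟨c.2⟩
  obtain ⟨τ, hτ⟩ := hpat.exists_eq_graphOn
  rw [hw] at hτ
  exact ⟨τ, w, hτ⟩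

end TwoByTwo

namespace Subst

variable {A : Type*}

namespace DominoComplete

variable {σ : Subst A (ℤ × ℤ)} (hdc : σ.DominoComplete)
include hdc

theorem isSome_ruleVec_right (v : ℤ × ℤ) (t t' : A) :
    (σ.ruleVec (v, t) (v + (1, 0), t')).isSome := by
  have h := (hdc.2 t t').1
  rwa [← σ.ruleVec_add_right _ _ v, Prod.zero_eq_mk.symm, zero_add, add_comm] at h

theorem isSome_ruleVec_up (v : ℤ × ℤ) (t t' : A) :
    (σ.ruleVec (v, t) (v + (0, 1), t')).isSome := by
  have h := (hdc.2 t t').2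
  rwa [← σ.ruleVec_add_right _ _ v, Prod.zero_eq_mk.symm, zero_add, add_comm] at h

theorem eq_add_of_isSome_ruleVec {v v' : ℤ × ℤ} {t t' : A}
    (h : (σ.ruleVec (v, t) (v', t')).isSome) :
    v' = v + (1, 0) ∨ v = v' + (1, 0) ∨ v' = v + (0, 1) ∨ v = v' + (0, 1) := by
  obtain ⟨x, y⟩ := v
  obtain ⟨x', y'⟩ := v'
  rcases σ.isSome_ruleVec_iff.1 h with h | h <;>
  · have := hdc.1 _ _ _ (Option.isSome_iff_ne_none.1 h)
    simp only [Prod.mk_sub_mk, Prod.mk_add_mk, Prod.ext_iff] at this ⊢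
    omega

end DominoComplete

variable {σ : Subst A (ℤ × ℤ)}

section TypeField

variable (hdc : σ.DominoComplete) {τ : ℤ × ℤ → A}
  (hsq : ∀ w, σ.ConsistentOn (graphOn τ (square w)))
include hdc hsq

theorem edgeVec_swap (v : ℤ × ℤ) {u : ℤ × ℤ} (hu : u = (1, 0) ∨ u = (0, 1)) :
    σ.edgeVec τ (v + u) v = -σ.edgeVec τ v (v + u) := by
  have hmem : ∀ u ∈ square v, (u, τ u) ∈ graphOn τ (square v) := fun u => mk_mem_graphOn
  rcases hu with rfl | rfl
  · exact (hsq v).ruleVec_swap (isPattern_graphOn τ _) (hmem _ (by simp [square]))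
      (hmem _ (by simp [square])) (hdc.isSome_ruleVec_right v _ _)
  · exact (hsq v).ruleVec_swap (isPattern_graphOn τ _) (hmem _ (by simp [square]))
      (hmem _ (by simp [square])) (hdc.isSome_ruleVec_up v _ _)

theorem edgeVec_curl (v : ℤ × ℤ) :
    σ.edgeVec τ v (v + (1, 0)) + σ.edgeVec τ (v + (1, 0)) (v + (1, 0) + (0, 1)) =
      σ.edgeVec τ v (v + (0, 1)) + σ.edgeVec τ (v + (0, 1)) (v + (0, 1) + (1, 0)) := by
  have hmem : ∀ u ∈ square v, (u, τ u) ∈ graphOn τ (square v) := fun u => mk_mem_graphOn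
  rw [add_one_zero_add_zero_one, add_zero_one_add_one_zero]
  exact (hsq v).ruleVec_add_ruleVec (isPattern_graphOn τ _) (hmem _ (by simp [square]))
    (hmem _ (by simp [square])) (hmem _ (by simp [square])) (hmem _ (by simp [square]))
    (hdc.isSome_ruleVec_right v _ _) (add_one_zero_add_zero_one v ▸ hdc.isSome_ruleVec_up _ _ _)
    (hdc.isSome_ruleVec_up v _ _) (add_zero_one_add_one_zero v ▸ hdc.isSome_ruleVec_right _ _ _)

theorem exists_potential_edgeVec :
    ∃ Φ : ℤ × ℤ → ℤ × ℤ, ∀ v v', (σ.ruleVec (v, τ v) (v', τ v')).isSome →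
      σ.edgeVec τ v v' = Φ v' - Φ v := by
  obtain ⟨Φ, hΦ⟩ := exists_potential_of_curl_eq_zero
    (fun v => σ.edgeVec τ v (v + (1, 0))) (fun v => σ.edgeVec τ v (v + (0, 1)))
    (edgeVec_curl hdc hsq)
  refine ⟨Φ, fun v v' h => ?_⟩
  rcases hdc.eq_add_of_isSome_ruleVec h with rfl | rfl | rfl | rfl
  · rw [(hΦ v).1]; abel
  · rw [edgeVec_swap hdc hsq v' (.inl rfl), (hΦ v').1]; abel
  · rw [(hΦ v).2]; abel
  · rw [edgeVec_swap hdc hsq v' (.inr rfl), (hΦ v').2]; abel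

end TypeField

theorem consistentOn_of_forall_square (hdc : σ.DominoComplete)
    (hsq : ∀ τ w, σ.ConsistentOn (graphOn τ (square w))) {P : Finset ((ℤ × ℤ) × A)}
    (hP : IsPattern P) : σ.ConsistentOn P := by
  rcases isEmpty_or_nonempty A with _ | _
  · exact consistentOn_of_potential 0 fun c => isEmptyElim c.2
  obtain ⟨τ, hτ⟩ := hP.exists_eq_graphOn
  obtain ⟨Φ, hΦ⟩ := exists_potential_edgeVec hdc (hsq τ)
  rw [hτ]
  refine consistentOn_of_potential (fun c => Φ c.1) ?_
  simp only [forall_mem_graphOn]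
  exact fun v _ v' _ => hΦ v v'

theorem covered_graphOn_square (hdc : σ.DominoComplete) (τ : ℤ × ℤ → A) (w : ℤ × ℤ) :
    σ.Covered (graphOn τ (square w)) := by
  set P := graphOn τ (square w)
  have hP : IsPattern P := isPattern_graphOn τ (square w)
  have hmem : ∀ u ∈ square w, (u, τ u) ∈ P := fun u => mk_mem_graphOn
  suffices h : ∀ c ∈ P, σ.Joined P (w, τ w) c from
    fun c hc c' hc' => (h c hc).symm.trans hP (h c' hc')
  show ∀ c ∈ graphOn τ (square w), σ.Joined P (w, τ w) c
  simp only [forall_mem_graphOn, square, Finset.mem_insert, Finset.mem_singleton,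
    forall_eq_or_imp, forall_eq]
  have hright := hdc.isSome_ruleVec_right w (τ w) (τ (w + (1, 0)))
  have hup := hdc.isSome_ruleVec_up w (τ w) (τ (w + (0, 1)))
  have hdiag := add_one_zero_add_zero_one w ▸
    hdc.isSome_ruleVec_up (w + (1, 0)) (τ (w + (1, 0))) (τ (w + (1, 0) + (0, 1)))
  refine ⟨joined_refl (hmem _ ?_), joined_of_isSome hP (hmem _ ?_) (hmem _ ?_) hright,
    joined_of_isSome hP (hmem _ ?_) (hmem _ ?_) hup,
    (joined_of_isSome hP (hmem _ ?_) (hmem _ ?_) hright).trans hP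
      (joined_of_isSome hP (hmem _ ?_) (hmem _ ?_) hdiag)⟩ <;> simp [square]

end Subst

theorem dominoComplete_consistent_iff_twoByTwo_general {A : Type*}
    (σ : Subst A (ℤ × ℤ)) (hdc : σ.DominoComplete) :
    σ.Consistent ↔ ∀ P : Finset ((ℤ × ℤ) × A), IsTwoByTwo P → σ.ConsistentOn P := by
  refine ⟨fun hcons P hP => ?_, fun h P hP _ => ?_⟩
  · obtain ⟨τ, w, rfl⟩ := hP.exists_eq_graphOn_square
    exact hcons _ (isPattern_graphOn τ _) (σ.covered_graphOn_square hdc τ w)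
  · exact σ.consistentOn_of_forall_square hdc
      (fun τ w => h _ (isTwoByTwo_graphOn_square τ w)) hP

/-- Theorem `deccons`.  A two-dimensional domino-complete
substitution is consistent if and only if it is consistent on every `2 × 2`
pattern. -/
theorem dominoComplete_consistent_iff_twoByTwo {A : Type*} [Fintype A]
    (σ : Subst A (ℤ × ℤ)) (hdc : σ.DominoComplete) :
    σ.Consistent ↔ ∀ P : Finset ((ℤ × ℤ) × A), IsTwoByTwo P → σ.ConsistentOn P :=
  dominoComplete_consistent_iff_twoByTwo_general σ hdc
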